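/- Let (Γ,Ω) be a consistent pair of sets of sentences with Γ⊢φ∨ψ. If (Γ∪{φ},Ω) is inconsistent then (Γ∪{ψ},Ω) is consistent. -/

import Mathlib

namespace FOFS

/-- A signature: constants, predicate symbols, and arities. -/
structure Signature where
  Const : Type
  Pred : Type
  arity : Pred → ℕ

/-- Terms: variables (indexed by naturals) or constants. -/
inductive Term (C : Type) where
  | var : ℕ → Term C
  | const : C → Term C

namespace Term

def fv {C : Type} : Term C → Set ℕ
  | var x => {x}
  | const _ => ∅

def consts {C : Type} : Term C → Set C
  | var _ => ∅
  | const c => {c}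

/-- Substitute the constant `c` for the variable `x`. -/
def substVC {C : Type} (x : ℕ) (c : C) : Term C → Term C
  | var y => if y = x then const c else var y
  | const d => const d

/-- Substitute the variable `x` for the constant `c`. -/
def substCV {C : Type} [DecidableEq C] (c : C) (x : ℕ) : Term C → Term C
  | var y => var y
  | const d => if d = c then var x else const d

end Term

/-- Formulas of the first-order intuitionistic modal language. -/
inductive Formula (σ : Signature) where
  | atom : (P : σ.Pred) → (Fin (σ.arity P) → Term σ.Const) → Formula σ
  | eq : Term σ.Const → Term σ.Const → Formula σ
  | and : Formula σ → Formula σ → Formula σ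
  | or : Formula σ → Formula σ → Formula σ
  | imp : Formula σ → Formula σ → Formula σ
  | box : Formula σ → Formula σ
  | dia : Formula σ → Formula σ
  | all : ℕ → Formula σ → Formula σ
  | ex : ℕ → Formula σ → Formula σ
  | bot : Formula σ

namespace Formula

variable {σ : Signature}

def neg (φ : Formula σ) : Formula σ := φ.imp .bot

def top : Formula σ := Formula.bot.imp .bot

/-- Free variables of a formula. -/
def fv : Formula σ → Set ℕ
  | atom _ ts => ⋃ i, (ts i).fv
  | eq s t => s.fv ∪ t.fv
  | and φ ψ => φ.fv ∪ ψ.fv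
  | or φ ψ => φ.fv ∪ ψ.fv
  | imp φ ψ => φ.fv ∪ ψ.fv
  | box φ => φ.fv
  | dia φ => φ.fv
  | all x φ => φ.fv \ {x}
  | ex x φ => φ.fv \ {x}
  | bot => ∅

/-- All variables occurring in a formula (free, bound, or as a binder). -/
def vars : Formula σ → Set ℕ
  | atom _ ts => ⋃ i, (ts i).fv
  | eq s t => s.fv ∪ t.fv
  | and φ ψ => φ.vars ∪ ψ.vars
  | or φ ψ => φ.vars ∪ ψ.vars
  | imp φ ψ => φ.vars ∪ ψ.vars
  | box φ => φ.vars
  | dia φ => φ.vars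
  | all x φ => insert x φ.vars
  | ex x φ => insert x φ.vars
  | bot => ∅

/-- Constants occurring in a formula. -/
def consts : Formula σ → Set σ.Const
  | atom _ ts => ⋃ i, (ts i).consts
  | eq s t => s.consts ∪ t.consts
  | and φ ψ => φ.consts ∪ ψ.consts
  | or φ ψ => φ.consts ∪ ψ.consts
  | imp φ ψ => φ.consts ∪ ψ.consts
  | box φ => φ.consts
  | dia φ => φ.consts
  | all _ φ => φ.consts
  | ex _ φ => φ.consts
  | bot => ∅

/-- Substitute the constant `c` for free occurrences of the variable `x`. -/
def substVC (x : ℕ) (c : σ.Const) : Formula σ → Formula σ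
  | atom P ts => atom P (fun i => (ts i).substVC x c)
  | eq s t => eq (s.substVC x c) (t.substVC x c)
  | and φ ψ => and (φ.substVC x c) (ψ.substVC x c)
  | or φ ψ => or (φ.substVC x c) (ψ.substVC x c)
  | imp φ ψ => imp (φ.substVC x c) (ψ.substVC x c)
  | box φ => box (φ.substVC x c)
  | dia φ => dia (φ.substVC x c)
  | all y φ => if y = x then all y φ else all y (φ.substVC x c)
  | ex y φ => if y = x then ex y φ else ex y (φ.substVC x c)
  | bot => bot

/-- Substitute the variable `x` for all occurrences of the constant `c`. -/
def substCV [DecidableEq σ.Const] (c : σ.Const) (x : ℕ) : Formula σ → Formula σ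
  | atom P ts => atom P (fun i => (ts i).substCV c x)
  | eq s t => eq (s.substCV c x) (t.substCV c x)
  | and φ ψ => and (φ.substCV c x) (ψ.substCV c x)
  | or φ ψ => or (φ.substCV c x) (ψ.substCV c x)
  | imp φ ψ => imp (φ.substCV c x) (ψ.substCV c x)
  | box φ => box (φ.substCV c x)
  | dia φ => dia (φ.substCV c x)
  | all y φ => all y (φ.substCV c x)
  | ex y φ => ex y (φ.substCV c x)
  | bot => bot

/-- Modal-free formulas. -/
def ModalFree : Formula σ → Prop
  | atom _ _ => True
  | eq _ _ => True
  | and φ ψ => φ.ModalFree ∧ ψ.ModalFree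
  | or φ ψ => φ.ModalFree ∧ ψ.ModalFree
  | imp φ ψ => φ.ModalFree ∧ ψ.ModalFree
  | box _ => False
  | dia _ => False
  | all _ φ => φ.ModalFree
  | ex _ φ => φ.ModalFree
  | bot => True

/-- A sentence is a formula with no free variables. -/
def Sentence (φ : Formula σ) : Prop := φ.fv = ∅

end Formula

/-- The Hilbert system for first-order Fischer Servi logic, parametrized by an
extra set of axioms `Ax` (take `Ax = NoAx` for the base logic `FOFS`). -/
inductive Prv {σ : Signature} (Ax : Formula σ → Prop) : Formula σ → Prop
  | extraAx {φ : Formula σ} : Ax φ → Prv Ax φ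
  -- intuitionistic propositional axioms (substitution instances of IPC theorems)
  | a1 (φ ψ : Formula σ) : Prv Ax (φ.imp (ψ.imp φ))
  | a2 (φ ψ χ : Formula σ) :
      Prv Ax ((φ.imp (ψ.imp χ)).imp ((φ.imp ψ).imp (φ.imp χ)))
  | andI (φ ψ : Formula σ) : Prv Ax (φ.imp (ψ.imp (φ.and ψ)))
  | andE1 (φ ψ : Formula σ) : Prv Ax ((φ.and ψ).imp φ)
  | andE2 (φ ψ : Formula σ) : Prv Ax ((φ.and ψ).imp ψ)
  | orI1 (φ ψ : Formula σ) : Prv Ax (φ.imp (φ.or ψ))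
  | orI2 (φ ψ : Formula σ) : Prv Ax (ψ.imp (φ.or ψ))
  | orE (φ ψ χ : Formula σ) :
      Prv Ax ((φ.imp χ).imp ((ψ.imp χ).imp ((φ.or ψ).imp χ)))
  | exFalso (φ : Formula σ) : Prv Ax (Formula.bot.imp φ)
  -- K axioms
  | kBoxA1 (φ ψ : Formula σ) :
      Prv Ax ((Formula.box (φ.and ψ)).imp ((Formula.box φ).and (Formula.box ψ)))
  | kBoxA2 (φ ψ : Formula σ) :
      Prv Ax (((Formula.box φ).and (Formula.box ψ)).imp (Formula.box (φ.and ψ)))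
  | kBoxB : Prv Ax (Formula.box Formula.top)
  | kDiaA1 (φ ψ : Formula σ) :
      Prv Ax ((Formula.dia (φ.or ψ)).imp ((Formula.dia φ).or (Formula.dia ψ)))
  | kDiaA2 (φ ψ : Formula σ) :
      Prv Ax (((Formula.dia φ).or (Formula.dia ψ)).imp (Formula.dia (φ.or ψ)))
  | kDiaB : Prv Ax (Formula.neg (Formula.dia Formula.bot))
  -- Fischer Servi axioms
  | fs1 (φ ψ : Formula σ) :
      Prv Ax (((Formula.dia φ).imp (Formula.box ψ)).imp (Formula.box (φ.imp ψ)))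
  | fs2 (φ ψ : Formula σ) :
      Prv Ax ((Formula.dia (φ.imp ψ)).imp ((Formula.box φ).imp (Formula.dia ψ)))
  -- quantifier axioms
  | univ (x : ℕ) (c : σ.Const) (φ : Formula σ) :
      Prv Ax ((Formula.all x φ).imp (φ.substVC x c))
  | exist (x : ℕ) (c : σ.Const) (φ : Formula σ) :
      Prv Ax ((φ.substVC x c).imp (Formula.ex x φ))
  | allAnt {x : ℕ} {ψ : Formula σ} (φ : Formula σ) : x ∉ ψ.fv →
      Prv Ax ((Formula.all x (φ.imp ψ)).imp ((Formula.ex x φ).imp ψ))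
  | allCon {x : ℕ} {φ : Formula σ} (ψ : Formula σ) : x ∉ φ.fv →
      Prv Ax ((Formula.all x (φ.imp ψ)).imp (φ.imp (Formula.all x ψ)))
  -- identity axioms
  | idRef (c : σ.Const) : Prv Ax (Formula.eq (Term.const c) (Term.const c))
  | idSub {φ : Formula σ} (x : ℕ) (c₁ c₂ : σ.Const) : φ.ModalFree →
      Prv Ax ((Formula.eq (Term.const c₁) (Term.const c₂)).imp
        ((φ.substVC x c₁).imp (φ.substVC x c₂)))
  -- rules
  | mp {φ ψ : Formula σ} : Prv Ax (φ.imp ψ) → Prv Ax φ → Prv Ax ψ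
  | gen {φ : Formula σ} {x : ℕ} {c : σ.Const} : c ∉ φ.consts →
      Prv Ax (φ.substVC x c) → Prv Ax (Formula.all x φ)
  | regBox {φ ψ : Formula σ} : Prv Ax (φ.imp ψ) →
      Prv Ax ((Formula.box φ).imp (Formula.box ψ))
  | regDia {φ ψ : Formula σ} : Prv Ax (φ.imp ψ) →
      Prv Ax ((Formula.dia φ).imp (Formula.dia ψ))

/-- No extra axioms: the base logic `FOFS`. -/
def NoAx {σ : Signature} : Formula σ → Prop := fun _ => False

/-- The extra axiom `D : □φ → ◇φ`. -/
def DAx {σ : Signature} : Formula σ → Prop :=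
  fun χ => ∃ φ : Formula σ, χ = (Formula.box φ).imp (Formula.dia φ)

/-- Conjunction of a finite list of formulas. -/
def conjList {σ : Signature} (L : List (Formula σ)) : Formula σ :=
  L.foldr Formula.and Formula.top

/-- Disjunction of a finite list of formulas. -/
def disjList {σ : Signature} (L : List (Formula σ)) : Formula σ :=
  L.foldr Formula.or Formula.bot

/-- `Γ ⊢ φ`: some finite conjunction of members of `Γ` provably implies `φ`. -/
def ProvesFrom {σ : Signature} (Ax : Formula σ → Prop)
    (Γ : Set (Formula σ)) (φ : Formula σ) : Prop :=
  ∃ L : List (Formula σ), (∀ γ ∈ L, γ ∈ Γ) ∧ Prv Ax ((conjList L).imp φ)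

/-- The pair `(Γ, Ω)` is consistent: no finite disjunction of members of `Ω`
is derivable from `Γ`. -/
def PairConsistent {σ : Signature} (Ax : Formula σ → Prop)
    (Γ Ω : Set (Formula σ)) : Prop :=
  ¬ ∃ L : List (Formula σ), (∀ γ ∈ L, γ ∈ Ω) ∧ ProvesFrom Ax Γ (disjList L)

/-- A saturated theory over the language whose constants are drawn from `K`:
a consistent, deductively closed, prime, Henkin set of sentences. -/
structure SaturatedIn {σ : Signature} (Ax : Formula σ → Prop)
    (K : Set σ.Const) (Γ : Set (Formula σ)) : Prop where
  inLang : ∀ φ ∈ Γ, Formula.Sentence φ ∧ Formula.consts φ ⊆ K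
  consistent : ¬ ProvesFrom Ax Γ Formula.bot
  dclosed : ∀ φ : Formula σ, Formula.Sentence φ → Formula.consts φ ⊆ K →
    ProvesFrom Ax Γ φ → φ ∈ Γ
  prime : ∀ φ ψ : Formula σ, φ.or ψ ∈ Γ → φ ∈ Γ ∨ ψ ∈ Γ
  henkin : ∀ (x : ℕ) (φ : Formula σ), Formula.ex x φ ∈ Γ →
    ∃ c ∈ K, φ.substVC x c ∈ Γ

/-- `□⁻Γ = {φ : □φ ∈ Γ}`. -/
def BoxSet {σ : Signature} (Γ : Set (Formula σ)) : Set (Formula σ) :=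
  {φ | Formula.box φ ∈ Γ}

/-- `◇̄Γ = {φ ∈ L(K) : ◇φ ∉ Γ}`. -/
def NDSet {σ : Signature} (K : Set σ.Const) (Γ : Set (Formula σ)) :
    Set (Formula σ) :=
  {φ | Formula.Sentence φ ∧ Formula.consts φ ⊆ K ∧ Formula.dia φ ∉ Γ}

section Toolkit

variable {σ : Signature} {Ax : Formula σ → Prop} {A B C X Y X' Y' : Formula σ}

open Formula

theorem prv_id : Prv Ax (A.imp A) :=
  Prv.mp (Prv.mp (Prv.a2 A (A.imp A) A) (Prv.a1 A (A.imp A))) (Prv.a1 A A)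

theorem prv_const (h : Prv Ax A) : Prv Ax (C.imp A) :=
  Prv.mp (Prv.a1 A C) h

theorem prv_mp_ctx (h1 : Prv Ax (C.imp (A.imp B))) (h2 : Prv Ax (C.imp A)) :
    Prv Ax (C.imp B) :=
  Prv.mp (Prv.mp (Prv.a2 C A B) h1) h2

theorem prv_comp (h1 : Prv Ax (A.imp B)) (h2 : Prv Ax (B.imp C)) :
    Prv Ax (A.imp C) :=
  prv_mp_ctx (prv_const h2) h1

theorem prv_andI' (h1 : Prv Ax (C.imp A)) (h2 : Prv Ax (C.imp B)) :
    Prv Ax (C.imp (A.and B)) :=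
  prv_mp_ctx (prv_comp h1 (Prv.andI A B)) h2

theorem imp_mono_right (h : Prv Ax (B.imp C)) :
    Prv Ax ((A.imp B).imp (A.imp C)) :=
  Prv.mp (Prv.a2 A B C) (prv_const h)

theorem prv_curry (h : Prv Ax ((A.and B).imp C)) :
    Prv Ax (A.imp (B.imp C)) :=
  prv_comp (Prv.andI A B) (imp_mono_right h)

theorem prv_ctx_comp (h1 : Prv Ax (C.imp (A.imp B))) (h2 : Prv Ax (B.imp X)) :
    Prv Ax (C.imp (A.imp X)) :=
  prv_comp h1 (imp_mono_right h2)

theorem prv_or_mono (h1 : Prv Ax (X.imp X')) (h2 : Prv Ax (Y.imp Y')) :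
    Prv Ax ((X.or Y).imp (X'.or Y')) :=
  Prv.mp (Prv.mp (Prv.orE X Y (X'.or Y')) (prv_comp h1 (Prv.orI1 X' Y')))
    (prv_comp h2 (Prv.orI2 X' Y'))

theorem conj_elim {L : List (Formula σ)} {γ : Formula σ} (h : γ ∈ L) :
    Prv Ax ((conjList L).imp γ) := by
  induction L with
  | nil => exact absurd h List.not_mem_nil
  | cons a L ih =>
    rcases List.mem_cons.mp h with h | h
    · subst h; exact Prv.andE1 _ _
    · exact prv_comp (Prv.andE2 _ _) (ih h)

theorem conj_intro {L : List (Formula σ)} {C : Formula σ}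
    (h : ∀ γ ∈ L, Prv Ax (C.imp γ)) : Prv Ax (C.imp (conjList L)) := by
  induction L with
  | nil => exact prv_const prv_id
  | cons a L ih =>
    exact prv_andI' (h a List.mem_cons_self)
      (ih fun γ hγ => h γ (List.mem_cons_of_mem a hγ))

theorem disj_inl {M1 M2 : List (Formula σ)} :
    Prv Ax ((disjList M1).imp (disjList (M1 ++ M2))) := by
  induction M1 with
  | nil => exact Prv.exFalso _
  | cons a M ih => exact prv_or_mono prv_id ih

theorem disj_inr {M1 M2 : List (Formula σ)} :
    Prv Ax ((disjList M2).imp (disjList (M1 ++ M2))) := by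
  induction M1 with
  | nil => exact prv_id
  | cons a M ih => exact prv_comp ih (Prv.orI2 _ _)

/-- Extract occurrences of `φ` from a list of members of `Γ ∪ {φ}`. -/
theorem extract_phi {Γ : Set (Formula σ)} {φ : Formula σ}
    {L : List (Formula σ)} (h : ∀ γ ∈ L, γ ∈ Γ ∪ {φ}) :
    ∃ M : List (Formula σ), (∀ γ ∈ M, γ ∈ Γ) ∧
      Prv Ax ((φ.and (conjList M)).imp (conjList L)) := by
  induction L with
  | nil => exact ⟨[], by simp, Prv.andE2 _ _⟩
  | cons a L ih =>
    obtain ⟨M, hM, hprv⟩ := ih fun γ hγ => h γ (List.mem_cons_of_mem a hγ)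
    rcases h a List.mem_cons_self with ha | ha
    · refine ⟨a :: M, ?_, ?_⟩
      · intro γ hγ
        rcases List.mem_cons.mp hγ with h' | h'
        · exact h' ▸ ha
        · exact hM γ h'
      · exact prv_andI' (prv_comp (Prv.andE2 _ _) (Prv.andE1 _ _))
          (prv_comp (prv_andI' (Prv.andE1 _ _)
            (prv_comp (Prv.andE2 _ _) (Prv.andE2 _ _))) hprv)
    · rcases ha with rfl
      exact ⟨M, hM, prv_andI' (Prv.andE1 _ _) hprv⟩

end Toolkit

end FOFS

open FOFS Formula in
/-- if `(Γ,Ω)` is consistent and `Γ ⊢ φ ∨ ψ`, and `(Γ∪{φ},Ω)` is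
inconsistent, then `(Γ∪{ψ},Ω)` is consistent. -/
theorem stmt9 {σ : Signature} (Γ Ω : Set (Formula σ)) (φ ψ : Formula σ)
    (hcon : PairConsistent NoAx Γ Ω)
    (hor : ProvesFrom NoAx Γ (φ.or ψ))
    (hinc : ¬ PairConsistent NoAx (Γ ∪ {φ}) Ω) :
    PairConsistent NoAx (Γ ∪ {ψ}) Ω := by
  rw [PairConsistent, not_not] at hinc
  obtain ⟨M1, hM1Ω, L1, hL1, hprv1⟩ := hinc
  obtain ⟨N1, hN1, hext1⟩ := extract_phi (Ax := NoAx) hL1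
  intro ⟨M2, hM2Ω, L2, hL2, hprv2⟩
  obtain ⟨N2, hN2, hext2⟩ := extract_phi (Ax := NoAx) hL2
  obtain ⟨L0, hL0, hprv0⟩ := hor
  apply hcon
  refine ⟨M1 ++ M2, ?_, L0 ++ N1 ++ N2, ?_, ?_⟩
  · intro γ hγ
    rcases List.mem_append.mp hγ with h | h
    · exact hM1Ω γ h
    · exact hM2Ω γ h
  · intro γ hγ
    rcases List.mem_append.mp hγ with h | h
    · rcases List.mem_append.mp h with h | h
      · exact hL0 γ h
      · exact hN1 γ h
    · exact hN2 γ h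
  · set C := conjList (L0 ++ N1 ++ N2) with hC
    have hCmem : ∀ γ ∈ L0 ++ N1 ++ N2, Prv NoAx (C.imp γ) := fun γ hγ => conj_elim hγ
    have hCN1 : Prv NoAx (C.imp (conjList N1)) :=
      conj_intro fun γ hγ => conj_elim (by simp [hγ])
    have hCN2 : Prv NoAx (C.imp (conjList N2)) :=
      conj_intro fun γ hγ => conj_elim (by simp [hγ])
    have hCL0 : Prv NoAx (C.imp (conjList L0)) :=
      conj_intro fun γ hγ => conj_elim (by simp [hγ])
    -- C → (φ ∨ ψ)
    have hCor : Prv NoAx (C.imp (φ.or ψ)) := prv_comp hCL0 hprv0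
    -- (φ ∧ conjList N1) → disjList M1, hence C → (φ → D)
    set D := disjList (M1 ++ M2) with hD
    have h1 : Prv NoAx ((φ.and (conjList N1)).imp D) :=
      prv_comp (prv_comp hext1 hprv1) disj_inl
    have h2 : Prv NoAx ((ψ.and (conjList N2)).imp D) :=
      prv_comp (prv_comp hext2 hprv2) disj_inr
    -- curry: conjList N1 → (φ → D)
    have h1' : Prv NoAx ((conjList N1).imp (φ.imp D)) :=
      prv_curry (prv_comp (prv_andI' (Prv.andE2 _ _) (Prv.andE1 _ _)) h1)
    have h2' : Prv NoAx ((conjList N2).imp (ψ.imp D)) :=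
      prv_curry (prv_comp (prv_andI' (Prv.andE2 _ _) (Prv.andE1 _ _)) h2)
    have hCφ : Prv NoAx (C.imp (φ.imp D)) := prv_comp hCN1 h1'
    have hCψ : Prv NoAx (C.imp (ψ.imp D)) := prv_comp hCN2 h2'
    exact prv_mp_ctx (prv_mp_ctx (prv_mp_ctx (prv_const (Prv.orE φ ψ D)) hCφ) hCψ) hCor
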